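/- Every r-local subdivision of a wheel has (weighted) diameter at most r. -/

import Mathlib

/-!
Common definitions: weighted graphs, weighted lengths of walks, 𝔽₂-generation of cycles,
subdivisions of wheels (with pieces and rim), theta graphs, the classes 𝒲 and 𝒲*,
fans and pre-fans, arcs/bridges/detours of a cycle relative to a theta graph.
-/

open SimpleGraph

namespace LocalWheels

variable {V : Type*} [Fintype V] [DecidableEq V]

/-- The weighted length of a walk: the sum of the weights of its edges. -/
def wlen {G : SimpleGraph V} (wt : Sym2 V → ℕ) {u v : V} (p : G.Walk u v) : ℕ :=
  (p.edges.map wt).sum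

/-- All edges of `G` have positive weight. -/
def WeightPos (G : SimpleGraph V) (wt : Sym2 V → ℕ) : Prop :=
  ∀ e ∈ G.edgeSet, 0 < wt e

/-- `t` is the 𝔽₂-sum (iterated symmetric difference) of finitely many members of `𝒞`. -/
def IsF2Sum (𝒞 : Set (Finset (Sym2 V))) (t : Finset (Sym2 V)) : Prop :=
  ∃ l : List (Finset (Sym2 V)), (∀ s ∈ l, s ∈ 𝒞) ∧ l.foldr symmDiff ∅ = t

/-- The edge sets of the cycles of the subgraph with edge set `E` having weighted length
at most `r`. -/
def shortCycleEdgeSets (G : SimpleGraph V) (wt : Sym2 V → ℕ) (r : ℕ∞) (E : Set (Sym2 V)) :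
    Set (Finset (Sym2 V)) :=
  {t | ∃ (v : V) (c : G.Walk v v), c.IsCycle ∧ (∀ e ∈ c.edges, e ∈ E) ∧
        (wlen wt c : ℕ∞) ≤ r ∧ c.edges.toFinset = t}

/-- Every cycle of the subgraph with edge set `E` is generated (over 𝔽₂) by the cycles of
that subgraph of weighted length at most `r`. -/
def LocallyGenerated (G : SimpleGraph V) (wt : Sym2 V → ℕ) (r : ℕ∞) (E : Set (Sym2 V)) : Prop :=
  ∀ (v : V) (c : G.Walk v v), c.IsCycle → (∀ e ∈ c.edges, e ∈ E) →
    IsF2Sum (shortCycleEdgeSets G wt r E) c.edges.toFinset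

/-- A subdivision of a wheel inside the graph `G`: a center, `n ≥ 3` branch vertices on the
rim, internally disjoint spoke paths from the center to the branch vertices and internally
disjoint rim arcs joining consecutive branch vertices. -/
structure WheelSubdiv (G : SimpleGraph V) where
  n : ℕ
  hn : 3 ≤ n
  center : V
  branch : Fin n → V
  branch_inj : Function.Injective branch
  center_ne : ∀ i, center ≠ branch i
  spoke : (i : Fin n) → G.Walk center (branch i)
  arc : (i : Fin n) → G.Walk (branch i) (branch (finRotate n i))
  spoke_path : ∀ i, (spoke i).IsPath
  arc_path : ∀ i, (arc i).IsPath
  spoke_spoke : ∀ i j, i ≠ j →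
    {x | x ∈ (spoke i).support} ∩ {x | x ∈ (spoke j).support} = {center}
  arc_arc : ∀ i j, i ≠ j →
    {x | x ∈ (arc i).support} ∩ {x | x ∈ (arc j).support} =
      ({branch i, branch (finRotate n i)} ∩ {branch j, branch (finRotate n j)} : Set V)
  spoke_arc : ∀ i j,
    {x | x ∈ (spoke i).support} ∩ {x | x ∈ (arc j).support} =
      ({center, branch i} ∩ {branch j, branch (finRotate n j)} : Set V)

namespace WheelSubdiv

variable {G : SimpleGraph V}

/-- The vertices of the subdivision of the wheel. -/
def support (W : WheelSubdiv G) : Set V :=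
  {x | ∃ i, x ∈ (W.spoke i).support ∨ x ∈ (W.arc i).support}

/-- The edges of the subdivision of the wheel. -/
def edges (W : WheelSubdiv G) : Set (Sym2 V) :=
  {e | ∃ i, e ∈ (W.spoke i).edges ∨ e ∈ (W.arc i).edges}

/-- The `i`-th piece of the subdivision of the wheel: the cycle through the center obtained
from the `i`-th spoke, the `i`-th rim arc and the `(i+1)`-st spoke. -/
def piece (W : WheelSubdiv G) (i : Fin W.n) : G.Walk W.center W.center :=
  (W.spoke i).append ((W.arc i).append (W.spoke (finRotate W.n i)).reverse)

/-- The weighted length of the `i`-th piece. -/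
def pieceLen (W : WheelSubdiv G) (wt : Sym2 V → ℕ) (i : Fin W.n) : ℕ :=
  wlen wt (W.piece i)

/-- The weighted length of the rim. -/
def rimLen (W : WheelSubdiv G) (wt : Sym2 V → ℕ) : ℕ :=
  ∑ i, wlen wt (W.arc i)

/-- The subdivision of the wheel is `r`-bounded: all pieces have length at most `r`. -/
def RBounded (W : WheelSubdiv G) (wt : Sym2 V → ℕ) (r : ℕ∞) : Prop :=
  ∀ i, (W.pieceLen wt i : ℕ∞) ≤ r

/-- The subdivision of the wheel has an `r`-explicit generating set: all pieces have
length at most `r`, or all pieces except one have length at most `r` and the rim has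
length at most `r`. -/
def RExplicit (W : WheelSubdiv G) (wt : Sym2 V → ℕ) (r : ℕ∞) : Prop :=
  (∀ i, (W.pieceLen wt i : ℕ∞) ≤ r) ∨
    ((∃ i₀, ∀ i, i ≠ i₀ → (W.pieceLen wt i : ℕ∞) ≤ r) ∧ (W.rimLen wt : ℕ∞) ≤ r)

/-- The subdivision of the wheel is `r`-local: its cycles of length at most `r` generate
all its cycles. -/
def RLocal (W : WheelSubdiv G) (wt : Sym2 V → ℕ) (r : ℕ∞) : Prop :=
  LocallyGenerated G wt r W.edges

end WheelSubdiv

/-- A theta graph of parameter `r` inside `G`: two branching vertices joined by three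
internally disjoint paths (its arms) such that at least two of the three cycles formed by
unions of pairs of arms have weighted length at most `r`. -/
structure Theta (G : SimpleGraph V) (wt : Sym2 V → ℕ) (r : ℕ∞) where
  v : V
  w : V
  hvw : v ≠ w
  arm : Fin 3 → G.Walk v w
  arm_path : ∀ i, (arm i).IsPath
  arm_inter : ∀ i j, i ≠ j →
    {x | x ∈ (arm i).support} ∩ {x | x ∈ (arm j).support} = {v, w}
  arm_ne : ∀ i j, i ≠ j → (arm i).edges ≠ (arm j).edges
  param : ∃ i j k : Fin 3, i ≠ j ∧ i ≠ k ∧ j ≠ k ∧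
    ((wlen wt (arm i) + wlen wt (arm j) : ℕ) : ℕ∞) ≤ r ∧
    ((wlen wt (arm i) + wlen wt (arm k) : ℕ) : ℕ∞) ≤ r

namespace Theta

variable {G : SimpleGraph V} {wt : Sym2 V → ℕ} {r : ℕ∞}

/-- The vertices of the theta graph. -/
def support (θ : Theta G wt r) : Set V := {x | ∃ i, x ∈ (θ.arm i).support}

/-- The edges of the theta graph. -/
def edges (θ : Theta G wt r) : Set (Sym2 V) := {e | ∃ i, e ∈ (θ.arm i).edges}

/-- `x` is an interior vertex of the `i`-th arm. -/
def interior (θ : Theta G wt r) (i : Fin 3) (x : V) : Prop :=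
  x ∈ (θ.arm i).support ∧ x ≠ θ.v ∧ x ≠ θ.w

/-- `x` is a branching vertex of the theta graph. -/
def IsBranch (θ : Theta G wt r) (x : V) : Prop := x = θ.v ∨ x = θ.w

end Theta

/-- `p` lies strictly between `x` and `y` on the path `A`. -/
def StrictlyBetween {G : SimpleGraph V} {u₀ w₀ : V} (A : G.Walk u₀ w₀) (p x y : V)
    (hp : p ∈ A.support) : Prop :=
  p ≠ x ∧ p ≠ y ∧
    ((x ∈ (A.takeUntil p hp).support ∧ y ∈ (A.dropUntil p hp).support) ∨
     (y ∈ (A.takeUntil p hp).support ∧ x ∈ (A.dropUntil p hp).support))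

/-- The subgraph of `G` with vertex set `S` and edge set `E` belongs to the class `𝒲`:
it is obtained from a theta graph of parameter `r` by attaching a path `P` at interior
vertices of two different arms, in such a way that it contains a cycle of length at most
`r` including `P`. -/
def InW (G : SimpleGraph V) (wt : Sym2 V → ℕ) (r : ℕ∞) (S : Set V) (E : Set (Sym2 V)) :
    Prop :=
  ∃ (θ : Theta G wt r) (i j : Fin 3) (p₁ p₂ : V) (P : G.Walk p₁ p₂),
    i ≠ j ∧ θ.interior i p₁ ∧ θ.interior j p₂ ∧ P.IsPath ∧
    {x | x ∈ P.support} ∩ θ.support = {p₁, p₂} ∧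
    S = θ.support ∪ {x | x ∈ P.support} ∧
    E = θ.edges ∪ {e | e ∈ P.edges} ∧
    ∃ (u : V) (c : G.Walk u u), c.IsCycle ∧ (∀ e ∈ c.edges, e ∈ E) ∧
      ((wlen wt c : ℕ) : ℕ∞) ≤ r ∧ ∀ e ∈ P.edges, e ∈ c.edges

/-- The subgraph of `G` with vertex set `S` and edge set `E` belongs to the class `𝒲*`:
it is obtained from a theta graph of parameter `r` by attaching a path `P` at interior
vertices of two different arms and a path `Q` at a branching vertex and an interior vertex
of an arm that also contains an endvertex of `P`, that endvertex of `P` lying strictly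
between the two endvertices of `Q` on that arm, in such a way that it contains a cycle of
length at most `r` including both `P` and `Q`. -/
def InWStar (G : SimpleGraph V) (wt : Sym2 V → ℕ) (r : ℕ∞) (S : Set V) (E : Set (Sym2 V)) :
    Prop :=
  ∃ (θ : Theta G wt r) (i j : Fin 3) (p₁ p₂ : V) (P : G.Walk p₁ p₂),
    i ≠ j ∧ θ.interior i p₁ ∧ θ.interior j p₂ ∧ P.IsPath ∧
    {x | x ∈ P.support} ∩ θ.support = {p₁, p₂} ∧
    ∃ (b q : V) (k : Fin 3) (Q : G.Walk b q),
      θ.IsBranch b ∧ θ.interior k q ∧ Q.IsPath ∧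
      {x | x ∈ Q.support} ∩ (θ.support ∪ {x | x ∈ P.support}) = {b, q} ∧
      (∃ (p : V) (hp : p ∈ (θ.arm k).support), (p = p₁ ∨ p = p₂) ∧
        StrictlyBetween (θ.arm k) p b q hp) ∧
      S = θ.support ∪ {x | x ∈ P.support} ∪ {x | x ∈ Q.support} ∧
      E = θ.edges ∪ {e | e ∈ P.edges} ∪ {e | e ∈ Q.edges} ∧
      ∃ (u : V) (c : G.Walk u u), c.IsCycle ∧ (∀ e ∈ c.edges, e ∈ E) ∧
        ((wlen wt c : ℕ) : ℕ∞) ≤ r ∧ (∀ e ∈ P.edges, e ∈ c.edges) ∧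
        ∀ e ∈ Q.edges, e ∈ c.edges

/-- `Q` is a subpath of the cycle `o`: a path all of whose edges are edges of `o`. -/
def IsSubpathOf {G : SimpleGraph V} {a b u : V} (Q : G.Walk a b) (o : G.Walk u u) : Prop :=
  Q.IsPath ∧ ∀ e ∈ Q.edges, e ∈ o.edges

namespace Theta

variable {G : SimpleGraph V} {wt : Sym2 V → ℕ} {r : ℕ∞}

/-- `Q` is an arc of the cycle `o` relative to the theta graph `θ`: a nontrivial subpath
of `o` meeting `θ` exactly in its two endvertices. -/
def IsArc (θ : Theta G wt r) {u a b : V} (o : G.Walk u u) (Q : G.Walk a b) : Prop :=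
  IsSubpathOf Q o ∧ 0 < Q.length ∧ a ∈ θ.support ∧ b ∈ θ.support ∧
    ∀ x ∈ Q.support, x ≠ a → x ≠ b → x ∉ θ.support

/-- `Q` is a `θ`-bridge of `o`: an arc whose endvertices are interior vertices of two
different arms of `θ`. -/
def IsBridgeArc (θ : Theta G wt r) {u a b : V} (o : G.Walk u u) (Q : G.Walk a b) : Prop :=
  θ.IsArc o Q ∧ ∃ i j : Fin 3, i ≠ j ∧ θ.interior i a ∧ θ.interior j b

/-- `Q` is a `θ`-detour of `o`: an arc that is not a bridge. -/
def IsDetourArc (θ : Theta G wt r) {u a b : V} (o : G.Walk u u) (Q : G.Walk a b) : Prop :=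
  θ.IsArc o Q ∧ ¬ ∃ i j : Fin 3, i ≠ j ∧ θ.interior i a ∧ θ.interior j b

/-- The arc `R` is strongly adjacent to the arc `S`: some subpath `X` of `o` joins an
endvertex of `R` to an endvertex of `S`, contains no internal vertex of any arc, and the
endvertex of `R` on `X` is not a branching vertex of `θ`. -/
def StronglyAdj (θ : Theta G wt r) {u r₁ r₂ s₁ s₂ : V} (o : G.Walk u u)
    (R : G.Walk r₁ r₂) (S : G.Walk s₁ s₂) : Prop :=
  ∃ (x y : V) (X : G.Walk x y), (x = r₁ ∨ x = r₂) ∧ (y = s₁ ∨ y = s₂) ∧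
    IsSubpathOf X o ∧
    (∀ z ∈ X.support, ∀ (a b : V) (Q : G.Walk a b), θ.IsArc o Q → z ∈ Q.support →
      z = a ∨ z = b) ∧
    ¬ θ.IsBranch x ∧ R.length = R.length ∧ S.length = S.length

/-- The bridge `Q` is primary (relative to the branching vertex `vb` on `o`): it has an
endvertex `x` such that a shortest path from `x` to `vb` within the cycle `o` includes `Q`. -/
def PrimaryBridge (θ : Theta G wt r) {u a b : V} (o : G.Walk u u) (vb : V)
    (Q : G.Walk a b) : Prop :=
  ∃ x : V, (x = a ∨ x = b) ∧ ∃ S : G.Walk x vb, IsSubpathOf S o ∧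
    (∀ S' : G.Walk x vb, IsSubpathOf S' o → wlen wt S ≤ wlen wt S') ∧
    ∀ e ∈ Q.edges, e ∈ S.edges

end Theta

/-- Common data of fans and pre-fans of parameter `r` centered at `v`: a nonempty sequence
of (oriented) cycles through `v`, each of weighted length at most `r`. -/
structure FanSeq (G : SimpleGraph V) (wt : Sym2 V → ℕ) (r : ℕ∞) (v : V) where
  n : ℕ
  hn : 0 < n
  piece : Fin n → G.Walk v v
  piece_cycle : ∀ i, (piece i).IsCycle
  piece_len : ∀ i, (wlen wt (piece i) : ℕ∞) ≤ r

namespace FanSeq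

variable {G : SimpleGraph V} {wt : Sym2 V → ℕ} {r : ℕ∞} {v : V}

/-- The index of the first piece. -/
def first (F : FanSeq G wt r v) : Fin F.n := ⟨0, F.hn⟩

/-- The index of the last piece. -/
def last (F : FanSeq G wt r v) : Fin F.n := ⟨F.n - 1, Nat.sub_lt F.hn Nat.one_pos⟩

/-- The start of the pre-fan: the edge of the first cycle immediately before `v`. -/
def preStart (F : FanSeq G wt r v) : Sym2 V :=
  s((F.piece F.first).reverse.getVert 1, v)

/-- The end of the pre-fan: the edge of the last cycle immediately after `v`. -/
def preEnd (F : FanSeq G wt r v) : Sym2 V :=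
  s(v, (F.piece F.last).getVert 1)

/-- The start of the fan: the first edge of the first cycle. -/
def fanStart (F : FanSeq G wt r v) : Sym2 V :=
  s(v, (F.piece F.first).getVert 1)

/-- The end of the fan: the last edge of the last cycle. -/
def fanEnd (F : FanSeq G wt r v) : Sym2 V :=
  s((F.piece F.last).reverse.getVert 1, v)

/-- The edges of (the union of the pieces of) the fan. -/
def edges (F : FanSeq G wt r v) : Set (Sym2 V) := {e | ∃ i, e ∈ (F.piece i).edges}

/-- The pre-fan condition: the vertex just after `v` on a piece equals the vertex just
before `v` on the next piece. -/
def IsPreFan (F : FanSeq G wt r v) : Prop :=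
  ∀ (i : ℕ) (h : i + 1 < F.n),
    (F.piece ⟨i, Nat.lt_of_succ_lt h⟩).getVert 1 =
      (F.piece ⟨i + 1, h⟩).reverse.getVert 1

/-- The fan condition: pieces at distance at least two meet exactly in `v`, and each piece
has the form `v Lᵢ Mᵢ Rᵢ v` where `Rᵢ = L_{i+1}` is exactly the intersection of consecutive
pieces. -/
def IsFan (F : FanSeq G wt r v) : Prop :=
  (∀ i j : Fin F.n, 2 ≤ |((i : ℕ) : ℤ) - ((j : ℕ) : ℤ)| →
      {x | x ∈ (F.piece i).support} ∩ {x | x ∈ (F.piece j).support} = {v}) ∧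
  ∀ (i : ℕ) (h : i + 1 < F.n),
    ∃ (x : V) (hx : x ∈ (F.piece ⟨i, Nat.lt_of_succ_lt h⟩).support)
      (hx' : x ∈ (F.piece ⟨i + 1, h⟩).support),
      (F.piece ⟨i, Nat.lt_of_succ_lt h⟩).dropUntil x hx =
        ((F.piece ⟨i + 1, h⟩).takeUntil x hx').reverse ∧
      {y | y ∈ (F.piece ⟨i, Nat.lt_of_succ_lt h⟩).support} ∩
          {y | y ∈ (F.piece ⟨i + 1, h⟩).support} =
        {y | y ∈ ((F.piece ⟨i, Nat.lt_of_succ_lt h⟩).dropUntil x hx).support}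

end FanSeq

end LocalWheels

/-!
Each edge of the subdivided wheel lies on a piece, and each piece is an 𝔽₂-sum of cycles of
length at most `r`, so one of these contains the edge: every vertex lies on a cycle of length at
most `r`. Any two cycles of a subdivided wheel meet. A cycle through the center contains a whole
spoke, hence a branch vertex, because the inner vertices of spokes and arcs have degree two; a
cycle avoiding the center uses no spoke and so runs along the whole rim, through every branch
vertex. Given `x` and `y`, pick short cycles through them and a common vertex `z`; going the
shorter way round each cycle, from `x` to `z` and from `z` to `y`, costs at most `r / 2 + r / 2`.
-/

namespace SimpleGraph.Walk

variable {V : Type*} {G : SimpleGraph V} {u v w x z : V}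

theorem IsPath.start_notMem_support_tail {p : G.Walk u v} (hp : p.IsPath) :
    u ∉ p.support.tail := by
  have h := hp.support_nodup
  rw [← p.cons_tail_support] at h
  exact (List.nodup_cons.1 h).1

theorem IsPath.append_of_support_inter {p : G.Walk u v} {q : G.Walk v w} (hp : p.IsPath)
    (hq : q.IsPath) (h : ∀ x ∈ p.support, x ∈ q.support → x = v) : (p.append q).IsPath := by
  rw [isPath_def, support_append, List.nodup_append]
  refine ⟨hp.support_nodup, hq.support_nodup.sublist (List.tail_sublist _), ?_⟩
  rintro x hxp _ hxq rfl
  exact hq.start_notMem_support_tail (h x hxp (List.mem_of_mem_tail hxq) ▸ hxq)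

theorem IsPath.isCycle_append_of_support_inter {p : G.Walk u v} {q : G.Walk v u}
    (hp : p.IsPath) (hq : q.IsPath) (h : ∀ x ∈ p.support, x ∈ q.support → x = u ∨ x = v)
    (hn : 1 < p.length ∨ 1 < q.length) : (p.append q).IsCycle := by
  refine hp.isCycle_append hq (fun x hxp hxq => ?_) hn
  rcases h x (List.mem_of_mem_tail hxp) (List.mem_of_mem_tail hxq) with rfl | rfl
  · exact hp.start_notMem_support_tail hxp
  · exact hq.start_notMem_support_tail hxq

theorem support_subset_support_of_edges_subset {p : G.Walk u v} {q : G.Walk w x}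
    (hp : ¬p.Nil) (h : p.edges ⊆ q.edges) : p.support ⊆ q.support := fun _ hz => by
  obtain ⟨e, he, hze⟩ := (mem_support_iff_exists_mem_edges_of_not_nil hp).1 hz
  exact mem_support_of_mem_edges (h he) hze

/-- In the graph with edge set `F` (containing the edges of `A`), the inner vertices of `A`
have degree two. -/
def IsSuspendedIn {a b : V} (A : G.Walk a b) (F : Set (Sym2 V)) : Prop :=
  ∀ z ∈ A.support, z ≠ a → z ≠ b → ∀ f ∈ F, z ∈ f → f ∈ A.edges

theorem IsSuspendedIn.mono {a b : V} {A : G.Walk a b} {F F' : Set (Sym2 V)}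
    (hA : A.IsSuspendedIn F) (hF : F' ⊆ F) : A.IsSuspendedIn F' :=
  fun z hz hza hzb f hf => hA z hz hza hzb f (hF hf)

theorem IsSuspendedIn.of_cons {a b : V} {h : G.Adj a w} {B : G.Walk w b} {F : Set (Sym2 V)}
    (hA : (cons h B).IsSuspendedIn F) (ha : a ∉ B.support) : B.IsSuspendedIn F := by
  intro z hz hzw hzb f hf hzf
  have hza : z ≠ a := fun hza => ha (hza ▸ hz)
  rcases List.mem_cons.1 (hA z (List.mem_cons_of_mem _ hz) hza hzb f hf hzf) with rfl | hfB
  · simp_all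
  · exact hfB

variable [DecidableEq V]

theorem IsCycle.exists_ne_mem_edges {c : G.Walk v v} (hc : c.IsCycle) (hz : z ∈ c.support) :
    ∃ e ∈ c.edges, ∃ f ∈ c.edges, e ≠ f ∧ z ∈ e ∧ z ∈ f := by
  have hc' := hc.rotate hz
  have hsub := (c.rotate_edges z hz).perm.subset
  refine ⟨_, hsub (mk_start_snd_mem_edges hc'.not_nil), _,
    hsub (mk_penultimate_end_mem_edges hc'.not_nil), fun h => ?_, Sym2.mem_mk_left _ _,
    Sym2.mem_mk_right _ _⟩
  rcases Sym2.eq_iff.1 h with ⟨-, h⟩ | ⟨-, h⟩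
  · exact (adj_snd hc'.not_nil).ne h.symm
  · exact hc'.snd_ne_penultimate h

theorem IsCycle.mem_edges_of_forall_eq_or_eq {c : G.Walk v v} (hc : c.IsCycle)
    (hz : z ∈ c.support) {e f : Sym2 V} (h : ∀ g ∈ c.edges, z ∈ g → g = e ∨ g = f) :
    e ∈ c.edges ∧ f ∈ c.edges := by
  obtain ⟨g₁, hg₁, g₂, hg₂, hne, hz₁, hz₂⟩ := hc.exists_ne_mem_edges hz
  rcases h g₁ hg₁ hz₁ with rfl | rfl <;> rcases h g₂ hg₂ hz₂ with rfl | rfl <;>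
    first | exact absurd rfl hne | exact ⟨‹_›, ‹_›⟩

/-- At an inner vertex of `A` the cycle has two edges, both on `A`, so it follows `A` from one
edge to the next. -/
theorem IsCycle.edges_subset_of_isSuspendedIn {c : G.Walk v v} (hc : c.IsCycle) {a b : V}
    {A : G.Walk a b} (hA : A.IsPath) (hsusp : A.IsSuspendedIn {f | f ∈ c.edges})
    {e : Sym2 V} (he : e ∈ A.edges) (hec : e ∈ c.edges) : A.edges ⊆ c.edges := by
  induction A generalizing e with
  | nil => simp at he
  | @cons a w b h B ih =>
    rw [cons_isPath_iff] at hA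
    cases B with
    | nil => simp_all
    | @cons _ x _ h' B' =>
      have hwB' : w ∉ B'.support := ((cons_isPath_iff _ _).1 hA.1).2
      have hw : w ∈ c.support → s(a, w) ∈ c.edges ∧ s(w, x) ∈ c.edges := fun hwc =>
        hc.mem_edges_of_forall_eq_or_eq hwc fun g hg hwg => by
          have hwb : w ≠ b := fun hwb => hwB' (hwb ▸ B'.end_mem_support)
          rcases List.mem_cons.1 (hsusp w (by simp) h.ne.symm hwb g hg hwg) with hg' | hg'
          · exact Or.inl hg'
          rcases List.mem_cons.1 hg' with hg' | hg'
          · exact Or.inr hg'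
          · exact absurd (mem_support_of_mem_edges hg' hwg) hwB'
      have ihB : ∀ e', e' ∈ (cons h' B').edges → e' ∈ c.edges → (cons h' B').edges ⊆ c.edges :=
        fun e' => ih hA.1 (hsusp.of_cons hA.2) (e := e')
      change e ∈ s(a, w) :: _ at he
      change s(a, w) :: _ ⊆ _
      rcases List.mem_cons.1 he with rfl | heB
      · have hwx := (hw (mem_support_of_mem_edges hec (Sym2.mem_mk_right _ _))).2
        exact List.cons_subset.2 ⟨hec, ihB _ List.mem_cons_self hwx⟩
      · have hB := ihB _ heB hec
        have hwc : w ∈ c.support :=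
          mem_support_of_mem_edges (hB List.mem_cons_self) (Sym2.mem_mk_left w x)
        exact List.cons_subset.2 ⟨(hw hwc).1, hB⟩

end SimpleGraph.Walk

namespace LocalWheels

open Walk

section WeightedLength

variable {V : Type*} {G : SimpleGraph V} {wt : Sym2 V → ℕ}

theorem wlen_append {u v w : V} (p : G.Walk u v) (q : G.Walk v w) :
    wlen wt (p.append q) = wlen wt p + wlen wt q := by
  simp [wlen, edges_append]

theorem wlen_reverse {u v : V} (p : G.Walk u v) : wlen wt p.reverse = wlen wt p := by
  simp [wlen, edges_reverse, List.sum_reverse]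

variable [DecidableEq V]

theorem wlen_bypass_le {u v : V} (p : G.Walk u v) :
    wlen wt p.bypass ≤ wlen wt p :=
  (p.edges_bypass_sublist_edges.map wt).sum_le_sum fun _ _ => Nat.zero_le _

theorem exists_walk_two_mul_wlen_le {v x z : V} {c : G.Walk v v} (hx : x ∈ c.support)
    (hz : z ∈ c.support) :
    ∃ p : G.Walk x z, p.edges ⊆ c.edges ∧ 2 * wlen wt p ≤ wlen wt c := by
  set c' := c.rotate x hx
  have hperm : c'.edges.Perm c.edges := (c.rotate_edges x hx).perm
  have hz' : z ∈ c'.support := (c.mem_support_rotate_iff x hx).2 hz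
  have hsplit : wlen wt (c'.takeUntil z hz') + wlen wt (c'.dropUntil z hz') = wlen wt c := by
    rw [← wlen_append, c'.take_spec hz']
    exact (hperm.map wt).sum_eq
  by_cases htake : 2 * wlen wt (c'.takeUntil z hz') ≤ wlen wt c
  · exact ⟨_, List.Subset.trans (c'.edges_takeUntil_subset_edges hz') hperm.subset, htake⟩
  · refine ⟨(c'.dropUntil z hz').reverse, ?_, ?_⟩
    · rw [edges_reverse]
      exact List.Subset.trans (List.reverse_subset.2 (c'.edges_dropUntil_subset_edges hz'))
        hperm.subset
    · rw [wlen_reverse]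
      omega

theorem exists_isPath_wlen_le_max {u v x y z : V} {c₁ : G.Walk u u} {c₂ : G.Walk v v}
    (hx : x ∈ c₁.support) (hz₁ : z ∈ c₁.support) (hz₂ : z ∈ c₂.support) (hy : y ∈ c₂.support) :
    ∃ p : G.Walk x y, p.IsPath ∧ (∀ e ∈ p.edges, e ∈ c₁.edges ∨ e ∈ c₂.edges) ∧
      wlen wt p ≤ max (wlen wt c₁) (wlen wt c₂) := by
  obtain ⟨p₁, hp₁, hw₁⟩ := exists_walk_two_mul_wlen_le (wt := wt) hx hz₁
  obtain ⟨p₂, hp₂, hw₂⟩ := exists_walk_two_mul_wlen_le (wt := wt) hz₂ hy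
  refine ⟨(p₁.append p₂).bypass, bypass_isPath _, fun e he => ?_, ?_⟩
  · rcases List.mem_append.1 (edges_append p₁ p₂ ▸ edges_bypass_subset_edges _ he) with h | h
    · exact Or.inl (hp₁ h)
    · exact Or.inr (hp₂ h)
  · have := wlen_bypass_le (wt := wt) (p₁.append p₂)
    rw [wlen_append] at this
    omega

end WeightedLength

theorem IsF2Sum.exists_mem {V : Type*} [DecidableEq V] {𝒞 : Set (Finset (Sym2 V))}
    {t : Finset (Sym2 V)} (h : IsF2Sum 𝒞 t) {e : Sym2 V} (he : e ∈ t) : ∃ s ∈ 𝒞, e ∈ s := by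
  obtain ⟨l, hl, rfl⟩ := h
  induction l with
  | nil => simp at he
  | cons s l ih =>
    rcases Finset.mem_symmDiff.1 he with ⟨hs, -⟩ | ⟨hl', -⟩
    · exact ⟨s, hl s List.mem_cons_self, hs⟩
    · exact ih (fun s' hs' => hl s' (List.mem_cons_of_mem _ hs')) hl'

theorem finRotate_apply_ne {n : ℕ} (hn : 2 ≤ n) (i : Fin n) : finRotate n i ≠ i := by
  obtain ⟨m, rfl⟩ := Nat.exists_eq_add_of_le' hn
  exact Equiv.Perm.mem_support.1 (by simp [support_finRotate])

theorem finRotate_induction {n : ℕ} (hn : 2 ≤ n) {S : Fin n → Prop} {i₀ : Fin n} (h₀ : S i₀)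
    (hS : ∀ i, S i → S (finRotate n i)) (j : Fin n) : S j := by
  obtain ⟨m, rfl⟩ := Nat.exists_eq_add_of_le' hn
  obtain ⟨k, rfl⟩ := isCycle_finRotate.exists_pow_eq (finRotate_apply_ne hn i₀)
    (finRotate_apply_ne hn j)
  induction k with
  | zero => exact h₀
  | succ k ih => rw [pow_succ', Equiv.Perm.mul_apply]; exact hS _ ih

namespace WheelSubdiv

variable {V : Type*} {G : SimpleGraph V} {W : WheelSubdiv G}

theorem two_le_n : 2 ≤ W.n := Nat.le_of_succ_le W.hn

theorem finRotate_ne (i : Fin W.n) : finRotate W.n i ≠ i := finRotate_apply_ne two_le_n i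

theorem spoke_not_nil (i : Fin W.n) : ¬(W.spoke i).Nil := not_nil_of_ne (W.center_ne i)

theorem arc_not_nil (i : Fin W.n) : ¬(W.arc i).Nil :=
  not_nil_of_ne fun h => finRotate_ne i (W.branch_inj h).symm

theorem eq_center_of_mem_spoke_of_mem_spoke {i j : Fin W.n} (hij : i ≠ j) {z : V}
    (hi : z ∈ (W.spoke i).support) (hj : z ∈ (W.spoke j).support) : z = W.center :=
  (Set.ext_iff.1 (W.spoke_spoke i j hij) z).1 ⟨hi, hj⟩

theorem eq_branch_of_mem_spoke_of_mem_arc {i j : Fin W.n} {z : V}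
    (hi : z ∈ (W.spoke i).support) (hj : z ∈ (W.arc j).support) :
    z = W.branch i ∧ (z = W.branch j ∨ z = W.branch (finRotate W.n j)) := by
  have h := (Set.ext_iff.1 (W.spoke_arc i j) z).1 ⟨hi, hj⟩
  simp only [Set.mem_inter_iff, Set.mem_insert_iff, Set.mem_singleton_iff] at h
  obtain ⟨rfl | rfl, h⟩ := h
  · simp [W.center_ne] at h
  · exact ⟨rfl, h⟩

theorem eq_branch_of_mem_arc_of_mem_arc {i j : Fin W.n} (hij : i ≠ j) {z : V}
    (hi : z ∈ (W.arc i).support) (hj : z ∈ (W.arc j).support) :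
    (z = W.branch i ∨ z = W.branch (finRotate W.n i)) ∧
      (z = W.branch j ∨ z = W.branch (finRotate W.n j)) := by
  simpa using (Set.ext_iff.1 (W.arc_arc i j hij) z).1 ⟨hi, hj⟩

theorem center_notMem_arc (j : Fin W.n) : W.center ∉ (W.arc j).support := fun h =>
  W.center_ne j (eq_branch_of_mem_spoke_of_mem_arc (W.spoke j).start_mem_support h).1

theorem spoke_isSuspendedIn (i : Fin W.n) : (W.spoke i).IsSuspendedIn W.edges := by
  intro z hz hzc hzb f hf hzf
  obtain ⟨j, hj | hj⟩ := hf
  · obtain rfl | hij := eq_or_ne i j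
    · exact hj
    · exact absurd (eq_center_of_mem_spoke_of_mem_spoke hij hz
        (mem_support_of_mem_edges hj hzf)) hzc
  · exact absurd (eq_branch_of_mem_spoke_of_mem_arc hz (mem_support_of_mem_edges hj hzf)).1 hzb

theorem arc_isSuspendedIn (i : Fin W.n) : (W.arc i).IsSuspendedIn W.edges := by
  intro z hz hz₁ hz₂ f hf hzf
  obtain ⟨j, hj | hj⟩ := hf
  · rcases (eq_branch_of_mem_spoke_of_mem_arc (mem_support_of_mem_edges hj hzf) hz).2
      with h | h <;> contradiction
  · obtain rfl | hij := eq_or_ne i j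
    · exact hj
    · rcases (eq_branch_of_mem_arc_of_mem_arc hij hz (mem_support_of_mem_edges hj hzf)).1
        with h | h <;> contradiction

theorem exists_mem_spoke_edges_of_center_mem {f : Sym2 V} (hf : f ∈ W.edges)
    (hcf : W.center ∈ f) : ∃ j, f ∈ (W.spoke j).edges := by
  obtain ⟨j, hj | hj⟩ := hf
  · exact ⟨j, hj⟩
  · exact absurd (mem_support_of_mem_edges hj hcf) (center_notMem_arc j)

theorem mem_edges_of_branch_mem {m : Fin W.n} {f : Sym2 V} (hf : f ∈ W.edges)
    (hbf : W.branch m ∈ f) :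
    f ∈ (W.spoke m).edges ∨ f ∈ (W.arc m).edges ∨
      ∃ j, finRotate W.n j = m ∧ f ∈ (W.arc j).edges := by
  obtain ⟨j, hj | hj⟩ := hf <;> obtain rfl | hmj := eq_or_ne m j
  · exact Or.inl hj
  · exact absurd (eq_center_of_mem_spoke_of_mem_spoke hmj (W.spoke m).end_mem_support
      (mem_support_of_mem_edges hj hbf)).symm (W.center_ne m)
  · exact Or.inr (Or.inl hj)
  · rcases (eq_branch_of_mem_arc_of_mem_arc hmj (W.arc m).start_mem_support
      (mem_support_of_mem_edges hj hbf)).2 with h | h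
    · exact absurd (W.branch_inj h) hmj
    · exact Or.inr (Or.inr ⟨j, (W.branch_inj h).symm, hj⟩)

theorem exists_mem_edges_of_mem_support {x : V} (hx : x ∈ W.support) :
    ∃ e ∈ W.edges, x ∈ e := by
  obtain ⟨i, hi | hi⟩ := hx
  · obtain ⟨e, he, hxe⟩ := (mem_support_iff_exists_mem_edges_of_not_nil (spoke_not_nil i)).1 hi
    exact ⟨e, ⟨i, Or.inl he⟩, hxe⟩
  · obtain ⟨e, he, hxe⟩ := (mem_support_iff_exists_mem_edges_of_not_nil (arc_not_nil i)).1 hi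
    exact ⟨e, ⟨i, Or.inr he⟩, hxe⟩

theorem piece_isCycle (i : Fin W.n) : (W.piece i).IsCycle := by
  have hback : ((W.arc i).append (W.spoke (finRotate W.n i)).reverse).IsPath := by
    refine (W.arc_path i).append_of_support_inter (W.spoke_path _).reverse fun z hz hz' => ?_
    rw [support_reverse, List.mem_reverse] at hz'
    exact (eq_branch_of_mem_spoke_of_mem_arc hz' hz).1
  refine (W.spoke_path i).isCycle_append_of_support_inter hback (fun z hz hz' => ?_) ?_
  · rcases (mem_support_append_iff _ _).1 hz' with hz' | hz'
    · exact Or.inr (eq_branch_of_mem_spoke_of_mem_arc hz hz').1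
    · rw [support_reverse, List.mem_reverse] at hz'
      exact Or.inl (eq_center_of_mem_spoke_of_mem_spoke (finRotate_ne i).symm hz hz')
  · have h₁ := (not_nil_iff_lt_length).1 (arc_not_nil i)
    have h₂ := (not_nil_iff_lt_length).1 (spoke_not_nil (finRotate W.n i))
    right
    simp only [length_append, length_reverse]
    omega

theorem piece_edges_subset (i : Fin W.n) : ∀ e ∈ (W.piece i).edges, e ∈ W.edges := by
  intro e he
  simp only [piece, edges_append, edges_reverse, List.mem_append, List.mem_reverse] at he
  rcases he with h | h | h
  · exact ⟨i, Or.inl h⟩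
  · exact ⟨i, Or.inr h⟩
  · exact ⟨_, Or.inl h⟩

theorem exists_mem_piece_edges {e : Sym2 V} (he : e ∈ W.edges) : ∃ i, e ∈ (W.piece i).edges := by
  obtain ⟨i, h | h⟩ := he <;> exact ⟨i, by simp [piece, edges_append, h]⟩

variable [DecidableEq V] {wt : Sym2 V → ℕ} {r : ℕ∞}

theorem exists_short_cycle_mem_support (hloc : W.RLocal wt r) {x : V} (hx : x ∈ W.support) :
    ∃ (u : V) (c : G.Walk u u), c.IsCycle ∧ (∀ e ∈ c.edges, e ∈ W.edges) ∧
      (wlen wt c : ℕ∞) ≤ r ∧ x ∈ c.support := by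
  obtain ⟨e, he, hxe⟩ := exists_mem_edges_of_mem_support hx
  obtain ⟨i, hi⟩ := exists_mem_piece_edges he
  obtain ⟨s, ⟨u, c, hc, hcE, hcr, rfl⟩, hes⟩ :=
    (hloc _ _ (piece_isCycle i) (piece_edges_subset i)).exists_mem (List.mem_toFinset.2 hi)
  exact ⟨u, c, hc, hcE, hcr, mem_support_of_mem_edges (List.mem_toFinset.1 hes) hxe⟩

section CycleInWheel

variable {v : V} {c : G.Walk v v} (hc : c.IsCycle) (hcE : ∀ e ∈ c.edges, e ∈ W.edges)
include hc hcE

theorem spoke_edges_subset {t : Fin W.n} {e : Sym2 V} (he : e ∈ (W.spoke t).edges)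
    (hec : e ∈ c.edges) : (W.spoke t).edges ⊆ c.edges :=
  hc.edges_subset_of_isSuspendedIn (W.spoke_path t) ((spoke_isSuspendedIn t).mono hcE) he hec

theorem arc_edges_subset {t : Fin W.n} {e : Sym2 V} (he : e ∈ (W.arc t).edges)
    (hec : e ∈ c.edges) : (W.arc t).edges ⊆ c.edges :=
  hc.edges_subset_of_isSuspendedIn (W.arc_path t) ((arc_isSuspendedIn t).mono hcE) he hec

theorem exists_branch_mem_support_of_center_mem (hcen : W.center ∈ c.support) :
    ∃ t, W.branch t ∈ c.support := by
  obtain ⟨e, he, hce⟩ := (mem_support_iff_exists_mem_edges_of_not_nil hc.not_nil).1 hcen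
  obtain ⟨t, ht⟩ := exists_mem_spoke_edges_of_center_mem (hcE e he) hce
  exact ⟨t, support_subset_support_of_edges_subset (spoke_not_nil t)
    (spoke_edges_subset hc hcE ht he) (W.spoke t).end_mem_support⟩

theorem notMem_edges_of_mem_spoke_edges (hcen : W.center ∉ c.support) {t : Fin W.n}
    {e : Sym2 V} (he : e ∈ (W.spoke t).edges) : e ∉ c.edges := fun hec =>
  hcen (support_subset_support_of_edges_subset (spoke_not_nil t)
    (spoke_edges_subset hc hcE he hec) (W.spoke t).start_mem_support)

theorem arc_finRotate_edges_subset (hcen : W.center ∉ c.support) {m : Fin W.n}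
    (hm : (W.arc m).edges ⊆ c.edges) : (W.arc (finRotate W.n m)).edges ⊆ c.edges := by
  set b := W.branch (finRotate W.n m)
  have hb : b ∈ c.support :=
    support_subset_support_of_edges_subset (arc_not_nil m) hm (W.arc m).end_mem_support
  have hat : ∀ g ∈ c.edges, b ∈ g →
      g = s(b, (W.arc (finRotate W.n m)).snd) ∨ g = s((W.arc m).penultimate, b) := by
    intro g hg hbg
    obtain ⟨y, rfl⟩ := Sym2.mem_iff_exists.1 hbg
    rcases mem_edges_of_branch_mem (hcE _ hg) hbg with h | h | ⟨k, hk, h⟩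
    · exact absurd hg (notMem_edges_of_mem_spoke_edges hc hcE hcen h)
    · exact Or.inl (by rw [← (W.arc_path _).eq_snd_of_mem_edges h])
    · obtain rfl := (finRotate W.n).injective hk
      exact Or.inr (by rw [← (W.arc_path _).eq_penultimate_of_mem_edges h, Sym2.eq_swap])
  exact arc_edges_subset hc hcE (mk_start_snd_mem_edges (arc_not_nil _))
    (hc.mem_edges_of_forall_eq_or_eq hb hat).1

theorem branch_mem_support_of_center_notMem (hcen : W.center ∉ c.support) (j : Fin W.n) :
    W.branch j ∈ c.support := by
  obtain ⟨e₀, he₀⟩ := List.exists_mem_of_ne_nil _ (edges_eq_nil.not.2 hc.not_nil)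
  obtain ⟨m₀, hm₀ | hm₀⟩ := hcE e₀ he₀
  · exact absurd he₀ (notMem_edges_of_mem_spoke_edges hc hcE hcen hm₀)
  have harcs := finRotate_induction (S := fun m => (W.arc m).edges ⊆ c.edges) two_le_n
    (arc_edges_subset hc hcE hm₀ he₀) (fun _ => arc_finRotate_edges_subset hc hcE hcen) j
  exact support_subset_support_of_edges_subset (arc_not_nil j) harcs (W.arc j).start_mem_support

theorem exists_branch_mem_support : ∃ t, W.branch t ∈ c.support := by
  by_cases hcen : W.center ∈ c.support
  · exact exists_branch_mem_support_of_center_mem hc hcE hcen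
  · exact ⟨⟨0, two_le_n.trans_lt' two_pos⟩, branch_mem_support_of_center_notMem hc hcE hcen _⟩

end CycleInWheel

theorem exists_mem_support_of_isCycle {u v : V} {c₁ : G.Walk u u} {c₂ : G.Walk v v}
    (hc₁ : c₁.IsCycle) (hE₁ : ∀ e ∈ c₁.edges, e ∈ W.edges)
    (hc₂ : c₂.IsCycle) (hE₂ : ∀ e ∈ c₂.edges, e ∈ W.edges) :
    ∃ z, z ∈ c₁.support ∧ z ∈ c₂.support := by
  by_cases h₁ : W.center ∈ c₁.support
  · by_cases h₂ : W.center ∈ c₂.support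
    · exact ⟨_, h₁, h₂⟩
    · obtain ⟨t, ht⟩ := exists_branch_mem_support hc₁ hE₁
      exact ⟨_, ht, branch_mem_support_of_center_notMem hc₂ hE₂ h₂ t⟩
  · obtain ⟨t, ht⟩ := exists_branch_mem_support hc₂ hE₂
    exact ⟨_, branch_mem_support_of_center_notMem hc₁ hE₁ h₁ t, ht⟩

end WheelSubdiv

end LocalWheels

theorem LocalWheels.stmt0_general {V : Type*} [DecidableEq V]
    (G : SimpleGraph V) (wt : Sym2 V → ℕ) (r : ℕ∞)
    (W : LocalWheels.WheelSubdiv G) (hloc : W.RLocal wt r) :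
    ∀ x ∈ W.support, ∀ y ∈ W.support,
      ∃ p : G.Walk x y, p.IsPath ∧ (∀ e ∈ p.edges, e ∈ W.edges) ∧
        (LocalWheels.wlen wt p : ℕ∞) ≤ r := by
  intro x hx y hy
  obtain ⟨_, c₁, hc₁, hE₁, hr₁, hx₁⟩ := WheelSubdiv.exists_short_cycle_mem_support hloc hx
  obtain ⟨_, c₂, hc₂, hE₂, hr₂, hy₂⟩ := WheelSubdiv.exists_short_cycle_mem_support hloc hy
  obtain ⟨z, hz₁, hz₂⟩ := WheelSubdiv.exists_mem_support_of_isCycle hc₁ hE₁ hc₂ hE₂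
  obtain ⟨p, hp, hpE, hpw⟩ := exists_isPath_wlen_le_max (wt := wt) hx₁ hz₁ hz₂ hy₂
  refine ⟨p, hp, fun e he => (hpE e he).elim (hE₁ e) (hE₂ e), ?_⟩
  calc (wlen wt p : ℕ∞) ≤ (max (wlen wt c₁) (wlen wt c₂) : ℕ) := by exact_mod_cast hpw
    _ ≤ r := max_le hr₁ hr₂

/-- Every `r`-local subdivision of a wheel has (weighted) diameter at
most `r`: any two of its vertices are joined by a path within the subdivision of
weighted length at most `r`. -/
theorem LocalWheels.stmt0 {V : Type*} [Fintype V] [DecidableEq V]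
    (G : SimpleGraph V) (wt : Sym2 V → ℕ) (hw : LocalWheels.WeightPos G wt) (r : ℕ∞)
    (W : LocalWheels.WheelSubdiv G) (hloc : W.RLocal wt r) :
    ∀ x ∈ W.support, ∀ y ∈ W.support,
      ∃ p : G.Walk x y, p.IsPath ∧ (∀ e ∈ p.edges, e ∈ W.edges) ∧
        (LocalWheels.wlen wt p : ℕ∞) ≤ r :=
  LocalWheels.stmt0_general G wt r W hloc
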